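/- Under Assumption on f (continuous on B(0,r), unique minimum x* with ‖x*‖ < r, f(x) = ‖x−x*‖²_H + ‖x−x*‖^α_H·ε(x−x*), |ε| ≤ M, α > 2), there exists h₀ > 0 such that for all 0 ≤ h ≤ h₀, the ellipsoid A_h = {x : ‖x−x*‖_H ≤ φ₋(h)} is contained in the sublevel set S_h = {x ∈ B(0,r) : f(x) ≤ h}, where φ₋ is the inverse of u ↦ u² + M u^α. -/

import Mathlib

open MeasureTheory

/-- The squared `H`-norm `yᵀ H y`. -/
noncomputable def Hquad {d : ℕ} (H : Matrix (Fin d) (Fin d) ℝ)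
    (y : EuclideanSpace ℝ (Fin d)) : ℝ :=
  dotProduct (y : Fin d → ℝ) (H.mulVec (y : Fin d → ℝ))

/-- The `H`-norm `‖y‖_H = √(yᵀ H y)`. -/
noncomputable def Hnorm {d : ℕ} (H : Matrix (Fin d) (Fin d) ℝ)
    (y : EuclideanSpace ℝ (Fin d)) : ℝ :=
  Real.sqrt (Hquad H y)

/-- The main assumption (Assumption 1 of the paper). -/
structure Assump (d : ℕ) (r : ℝ) (f : EuclideanSpace ℝ (Fin d) → ℝ)
    (xstar : EuclideanSpace ℝ (Fin d)) (H : Matrix (Fin d) (Fin d) ℝ)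
    (α : ℝ) (ε : EuclideanSpace ℝ (Fin d) → ℝ) (M : ℝ) : Prop where
  cont : ContinuousOn f (Metric.closedBall 0 r)
  opt_int : ‖xstar‖ < r
  fopt : f xstar = 0
  fpos : ∀ x ∈ Metric.closedBall (0 : EuclideanSpace ℝ (Fin d)) r, x ≠ xstar → 0 < f x
  symm : H.IsSymm
  posdef : H.PosDef
  alpha_gt : 2 < α
  M_pos : 0 < M
  eps_bdd : ∀ x, |ε x| ≤ M
  feq : ∀ x ∈ Metric.closedBall (0 : EuclideanSpace ℝ (Fin d)) r,
    f x = Hnorm H (x - xstar) ^ 2 + Hnorm H (x - xstar) ^ α * ε (x - xstar)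

open Set

lemma Hquad_smul {d : ℕ} (H : Matrix (Fin d) (Fin d) ℝ) (c : ℝ) (y : EuclideanSpace ℝ (Fin d)) :
    Hquad H (c • y) = c^2 * Hquad H y := by
  have h : ((c • y : EuclideanSpace ℝ (Fin d)) : Fin d → ℝ) = c • (y : Fin d → ℝ) := rfl
  unfold Hquad
  rw [h, Matrix.mulVec_smul, smul_dotProduct, dotProduct_smul, smul_eq_mul,
    smul_eq_mul]
  ring

lemma Hquad_continuous {d : ℕ} (H : Matrix (Fin d) (Fin d) ℝ) : Continuous (Hquad H) := by
  unfold Hquad dotProduct Matrix.mulVec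
  simp only [dotProduct]
  fun_prop

lemma Hquad_pos {d : ℕ} {H : Matrix (Fin d) (Fin d) ℝ} (hH : H.PosDef)
    {y : EuclideanSpace ℝ (Fin d)} (hy : y ≠ 0) : 0 < Hquad H y := by
  have := hH.dotProduct_mulVec_pos (x := (y : Fin d → ℝ)) (fun h => hy (by ext i; exact congrFun h i))
  simpa [Hquad] using this

lemma Hquad_nonneg {d : ℕ} {H : Matrix (Fin d) (Fin d) ℝ} (hH : H.PosDef)
    (y : EuclideanSpace ℝ (Fin d)) : 0 ≤ Hquad H y := by
  rcases eq_or_ne y 0 with rfl | hy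
  · have : Hquad H (0 : EuclideanSpace ℝ (Fin d)) = 0 := by
      simp [Hquad]
    simp [this]
  · exact (Hquad_pos hH hy).le

lemma exists_quad_lower {d : ℕ} {H : Matrix (Fin d) (Fin d) ℝ} (hH : H.PosDef) :
    ∃ c > (0:ℝ), ∀ y : EuclideanSpace ℝ (Fin d), c * ‖y‖^2 ≤ Hquad H y := by
  rcases Nat.eq_zero_or_pos d with rfl | hd
  · refine ⟨1, one_pos, fun y => ?_⟩
    have hy : y = 0 := Subsingleton.elim y 0
    subst hy
    simpa using Hquad_nonneg hH 0
  · have hne : (Metric.sphere (0 : EuclideanSpace ℝ (Fin d)) 1).Nonempty := by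
      refine ⟨EuclideanSpace.single ⟨0, hd⟩ (1:ℝ), ?_⟩
      simp [EuclideanSpace.norm_single]
    obtain ⟨y₀, hy₀, hmin⟩ :=
      (isCompact_sphere (0 : EuclideanSpace ℝ (Fin d)) 1).exists_isMinOn hne
        (Hquad_continuous H).continuousOn
    have hy₀n : ‖y₀‖ = 1 := by simpa using hy₀
    have hy₀0 : y₀ ≠ 0 := by intro h; rw [h] at hy₀n; simp at hy₀n
    refine ⟨Hquad H y₀, Hquad_pos hH hy₀0, fun y => ?_⟩
    rcases eq_or_ne y 0 with rfl | hy
    · simp [Hquad_nonneg hH]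
    · have hny : (0:ℝ) < ‖y‖ := norm_pos_iff.mpr hy
      set u : EuclideanSpace ℝ (Fin d) := ‖y‖⁻¹ • y with hu
      have hun : ‖u‖ = 1 := by
        rw [hu, norm_smul]
        simp [abs_of_pos (inv_pos.mpr hny), inv_mul_cancel₀ hny.ne']
      have hus : u ∈ Metric.sphere (0 : EuclideanSpace ℝ (Fin d)) 1 := by
        simp [hun]
      have h1 : Hquad H y₀ ≤ Hquad H u := hmin hus
      have h2 : Hquad H y = ‖y‖^2 * Hquad H u := by
        have : y = ‖y‖ • u := by
          rw [hu, smul_smul, mul_inv_cancel₀ hny.ne', one_smul]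
        conv_lhs => rw [this]
        rw [Hquad_smul]
      rw [h2]
      calc Hquad H y₀ * ‖y‖^2 ≤ Hquad H u * ‖y‖^2 := by
            apply mul_le_mul_of_nonneg_right h1 (by positivity)
        _ = ‖y‖^2 * Hquad H u := by ring


/-- there is `h₀ > 0` such that for `0 ≤ h ≤ h₀`, the ellipsoid
`A_h = {x : ‖x - x*‖_H ≤ φ₋(h)}` is contained in the sublevel set
`S_h = {x ∈ B(0,r) : f x ≤ h}`, where `φ₋` is the inverse of `u ↦ u² + M u^α`. -/
theorem ellipsoid_subset_sublevel
    {d : ℕ} {r : ℝ} {f : EuclideanSpace ℝ (Fin d) → ℝ}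
    {xstar : EuclideanSpace ℝ (Fin d)} {H : Matrix (Fin d) (Fin d) ℝ}
    {α : ℝ} {ε : EuclideanSpace ℝ (Fin d) → ℝ} {M : ℝ}
    (hf : Assump d r f xstar H α ε M)
    (φ : ℝ → ℝ)
    (hφ : ∀ h : ℝ, 0 ≤ h → 0 ≤ φ h ∧ (φ h) ^ 2 + M * (φ h) ^ α = h) :
    ∃ h₀ > (0 : ℝ), ∀ h : ℝ, 0 ≤ h → h ≤ h₀ →
      {x : EuclideanSpace ℝ (Fin d) | Hnorm H (x - xstar) ≤ φ h} ⊆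
        {x : EuclideanSpace ℝ (Fin d) | x ∈ Metric.closedBall 0 r ∧ f x ≤ h} := by
  obtain ⟨c, hc, hcq⟩ := exists_quad_lower hf.posdef
  set L := Real.sqrt c with hLdef
  have hL : 0 < L := Real.sqrt_pos.mpr hc
  have hLn : ∀ y : EuclideanSpace ℝ (Fin d), L * ‖y‖ ≤ Hnorm H y := by
    intro y
    rw [Hnorm]
    have he : L * ‖y‖ = Real.sqrt (c * ‖y‖^2) := by
      rw [Real.sqrt_mul hc.le, Real.sqrt_sq (norm_nonneg y)]
    rw [he]
    exact Real.sqrt_le_sqrt (hcq y)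
  have hδ : 0 < r - ‖xstar‖ := sub_pos.mpr hf.opt_int
  refine ⟨(L * (r - ‖xstar‖))^2, by positivity, fun h h0 hh x hx => ?_⟩
  simp only [Set.mem_setOf_eq] at hx ⊢
  obtain ⟨hφ0, hφeq⟩ := hφ h h0
  have hrpow0 : 0 ≤ (φ h) ^ α := Real.rpow_nonneg hφ0 α
  have hφsq : (φ h)^2 ≤ h := by nlinarith [mul_nonneg hf.M_pos.le hrpow0]
  set u := Hnorm H (x - xstar) with hudef
  have hu0 : 0 ≤ u := Real.sqrt_nonneg _
  have hφle : φ h ≤ L * (r - ‖xstar‖) := by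
    have h2 := Real.sqrt_le_sqrt (hφsq.trans hh)
    rwa [Real.sqrt_sq hφ0, Real.sqrt_sq (by positivity)] at h2
  have hxn : ‖x - xstar‖ ≤ r - ‖xstar‖ := by
    have h1 : L * ‖x - xstar‖ ≤ L * (r - ‖xstar‖) := ((hLn _).trans hx).trans hφle
    exact le_of_mul_le_mul_left h1 hL
  have hball : x ∈ Metric.closedBall (0 : EuclideanSpace ℝ (Fin d)) r := by
    rw [Metric.mem_closedBall, dist_zero_right]
    calc ‖x‖ = ‖(x - xstar) + xstar‖ := by rw [sub_add_cancel]
      _ ≤ ‖x - xstar‖ + ‖xstar‖ := norm_add_le _ _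
      _ ≤ r := by linarith
  refine ⟨hball, ?_⟩
  rw [hf.feq x hball]
  have h2 : u^2 ≤ (φ h)^2 := pow_le_pow_left₀ hu0 hx 2
  have h3 : u^α ≤ (φ h)^α := Real.rpow_le_rpow hu0 hx (by linarith [hf.alpha_gt])
  have h4 : u^α * ε (x - xstar) ≤ M * u^α := by
    have h5 := (abs_le.mp (hf.eps_bdd (x - xstar))).2
    calc u^α * ε (x - xstar) ≤ u^α * M :=
          mul_le_mul_of_nonneg_left h5 (Real.rpow_nonneg hu0 α)
      _ = M * u^α := mul_comm _ _
  have h6 : M * u^α ≤ M * (φ h)^α := mul_le_mul_of_nonneg_left h3 hf.M_pos.le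
  linarith
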